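/- Let d = (d_1, ..., d_n) be a decreasing sequence of positive integers with maximal element a = d_1 and minimal element b = d_n, where b < n. Let k_m denote the maximal strong index of d. Then for every strong index k with k > b, one has r_k ≤ k·(n − 1) + k_m·(a + b + 1) − k_m² − b·n; moreover, equality is only possible when k = k_m and d = (a^{k_m}, b^{n−k_m}). -/
import Mathlib

/-- `nrep d j` is the number of indices `i` with `d i = j` (denoted `n_j`). -/
def nrep {n : ℕ} (d : Fin n → ℕ) (j : ℕ) : ℕ :=
  (Finset.univ.filter fun i : Fin n => d i = j).card

/-- `rIdx d k` is `r_k = Σ_{i=1}^k (d_i + i·n_{k-i})` (indices `1`-based). -/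
def rIdx {n : ℕ} (d : Fin n → ℕ) (k : ℕ) : ℕ :=
  ∑ i ∈ Finset.univ.filter (fun i : Fin n => (i : ℕ) < k),
    (d i + ((i : ℕ) + 1) * nrep d (k - ((i : ℕ) + 1)))

lemma card_lt_aux {n : ℕ} (c : ℕ) (hc : c ≤ n) :
    (Finset.univ.filter fun i : Fin n => (i : ℕ) < c).card = c := by
  have : (Finset.univ.filter fun i : Fin n => (i : ℕ) < c)
      = Finset.map (Fin.castLEEmb hc) Finset.univ := by
    ext i
    simp only [Finset.mem_filter, Finset.mem_univ, true_and, Finset.mem_map,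
      Fin.castLEEmb_apply]
    constructor
    · intro h; exact ⟨⟨i, h⟩, by ext; rfl⟩
    · rintro ⟨j, rfl⟩; simpa using j.2
  rw [this]; simp

lemma S2_eq_aux {n : ℕ} (d : Fin n → ℕ) (k : ℕ) (hk1 : 1 ≤ k) (hkn : k ≤ n) :
    (∑ i ∈ Finset.univ.filter (fun i : Fin n => (i : ℕ) < k),
      ((i : ℕ) + 1) * nrep d (k - ((i : ℕ) + 1)))
    = ∑ m : Fin n, (if d m < k then k - d m else 0) := by
  have step1 : ∀ i : Fin n, ((i : ℕ) + 1) * nrep d (k - ((i : ℕ) + 1))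
      = ∑ m : Fin n, (if d m = k - ((i : ℕ) + 1) then (i : ℕ) + 1 else 0) := by
    intro i
    rw [Finset.sum_ite, Finset.sum_const, Finset.sum_const_zero]
    simp [nrep, mul_comm]
  calc (∑ i ∈ Finset.univ.filter (fun i : Fin n => (i : ℕ) < k),
      ((i : ℕ) + 1) * nrep d (k - ((i : ℕ) + 1)))
      = ∑ i : Fin n, ∑ m : Fin n,
          (if (i : ℕ) < k ∧ d m = k - ((i : ℕ) + 1) then (i : ℕ) + 1 else 0) := by
        rw [Finset.sum_filter]
        refine Finset.sum_congr rfl fun i _ => ?_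
        by_cases h : (i : ℕ) < k
        · simp only [h, if_true, true_and, step1 i]
        · simp [h]
    _ = ∑ m : Fin n, ∑ i : Fin n,
          (if (i : ℕ) < k ∧ d m = k - ((i : ℕ) + 1) then (i : ℕ) + 1 else 0) :=
        Finset.sum_comm
    _ = ∑ m : Fin n, (if d m < k then k - d m else 0) := by
        refine Finset.sum_congr rfl fun m _ => ?_
        by_cases hm : d m < k
        · have hcond : ∀ i : Fin n, ((i : ℕ) < k ∧ d m = k - ((i : ℕ) + 1))
              ↔ i = (⟨k - d m - 1, by omega⟩ : Fin n) := by
            intro i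
            rw [Fin.ext_iff]
            simp only []
            omega
          simp only [hcond]
          rw [Finset.sum_ite_eq' Finset.univ]
          simp only [Finset.mem_univ, if_true]
          simp [hm]
          omega
        · have hcond : ∀ i : Fin n, ¬((i : ℕ) < k ∧ d m = k - ((i : ℕ) + 1)) := by
            intro i; omega
          simp [hcond, hm]

set_option maxHeartbeats 1000000 in
/-- For a decreasing sequence `d` of positive integers with maximal element `a`, minimal
element `b < n`, and maximal strong index `k_m`: for every strong index `k > b`,
`r_k ≤ k(n-1) + k_m(a+b+1) - k_m² - bn`, with equality only possible when `k = k_m`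
and `d = (a^{k_m}, b^{n-k_m})`. -/
theorem strong_index_bound (n : ℕ) (hn : 0 < n) (d : Fin n → ℕ) (a b : ℕ)
    (ha : a = d ⟨0, hn⟩) (hb : b = d ⟨n - 1, by omega⟩)
    (hdec : Antitone d) (hpos : ∀ i, 0 < d i) (hbn : b < n)
    (km : ℕ) (hkm1 : 1 ≤ km) (hkmn : km ≤ n)
    (hkmstrong : km ≤ d ⟨km - 1, by omega⟩)
    (hkmmax : ∀ k, ∀ _ : k ≤ n, 1 ≤ k → k ≤ d ⟨k - 1, by omega⟩ → k ≤ km)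
    (k : ℕ) (hk1 : 1 ≤ k) (hkn : k ≤ n)
    (hstrong : k ≤ d ⟨k - 1, by omega⟩) (hkb : b < k) :
    (rIdx d k : ℤ) ≤ k * ((n : ℤ) - 1) + km * ((a : ℤ) + b + 1) - (km : ℤ) ^ 2 - b * n ∧
      ((rIdx d k : ℤ) = k * ((n : ℤ) - 1) + km * ((a : ℤ) + b + 1) - (km : ℤ) ^ 2 - b * n →
        k = km ∧ ∀ i : Fin n, d i = if (i : ℕ) < km then a else b) := by
  -- basic order facts
  have hkkm : k ≤ km := hkmmax k hkn hk1 hstrong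
  have had : ∀ i : Fin n, d i ≤ a := by
    intro i
    rw [ha]
    exact hdec (by simp [Fin.le_def])
  have hbd : ∀ i : Fin n, b ≤ d i := by
    intro i
    rw [hb]
    exact hdec (by simp [Fin.le_def]; omega)
  have hak : km ≤ a := by
    have : d ⟨km - 1, by omega⟩ ≤ d ⟨0, hn⟩ := hdec (by simp [Fin.le_def])
    omega
  have hlow : ∀ i : Fin n, (i : ℕ) < km → km ≤ d i := by
    intro i hi
    have : d ⟨km - 1, by omega⟩ ≤ d i := hdec (by simp [Fin.le_def]; omega)
    omega
  -- split rIdx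
  set A := Finset.univ.filter (fun i : Fin n => (i : ℕ) < k) with hA
  have hsplit : rIdx d k = (∑ i ∈ A, d i)
      + ∑ i ∈ A, ((i : ℕ) + 1) * nrep d (k - ((i : ℕ) + 1)) := by
    rw [rIdx, ← Finset.sum_add_distrib]
  have hS2 := S2_eq_aux d k hk1 hkn
  -- bound S1
  have hcardA : A.card = k := card_lt_aux k hkn
  have hS1le : ∀ i ∈ A, d i ≤ a := fun i _ => had i
  have hboundS1 : (∑ i ∈ A, d i) ≤ k * a := by
    calc (∑ i ∈ A, d i) ≤ ∑ _i ∈ A, a := Finset.sum_le_sum hS1le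
      _ = k * a := by rw [Finset.sum_const, hcardA, smul_eq_mul]
  -- bound S2 pointwise
  have hgle : ∀ m : Fin n, (if d m < k then k - d m else 0)
      ≤ (if km ≤ (m : ℕ) then k - b else 0) := by
    intro m
    by_cases hm : (m : ℕ) < km
    · have := hlow m hm
      simp only [if_neg (by omega : ¬ km ≤ (m : ℕ))]
      have : ¬ d m < k := by omega
      simp [this]
    · have := hbd m
      simp only [if_pos (by omega : km ≤ (m : ℕ))]
      split <;> omega
  have hsumh : (∑ m : Fin n, (if km ≤ (m : ℕ) then k - b else 0)) = (n - km) * (k - b) := by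
    rw [Finset.sum_ite, Finset.sum_const, Finset.sum_const_zero, add_zero, smul_eq_mul]
    congr 1
    have h1 := card_lt_aux km hkmn (n := n)
    have h2 := Finset.card_filter_add_card_filter_not (s := (Finset.univ : Finset (Fin n)))
      (p := fun i : Fin n => (i : ℕ) < km)
    have h3 : (Finset.univ.filter fun i : Fin n => ¬ (i : ℕ) < km)
        = (Finset.univ.filter fun i : Fin n => km ≤ (i : ℕ)) := by
      apply Finset.filter_congr; intro i _; simp only [not_lt]
    rw [← h3]
    simp only [Finset.card_univ, Fintype.card_fin] at h2
    omega
  have hboundS2 : (∑ m : Fin n, (if d m < k then k - d m else 0)) ≤ (n - km) * (k - b) := by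
    rw [← hsumh]
    exact Finset.sum_le_sum fun m _ => hgle m
  -- combined nat bound
  have hnat : rIdx d k ≤ k * a + (n - km) * (k - b) := by
    rw [hsplit, hS2]; omega
  -- cast to ℤ
  have hcast : ((n - km) * (k - b) : ℕ) = (((n : ℤ) - km) * ((k : ℤ) - b)) := by
    push_cast [hkmn, le_of_lt hkb]
    ring
  have hX : (rIdx d k : ℤ) ≤ (k : ℤ) * a + ((n : ℤ) - km) * ((k : ℤ) - b) := by
    have := hnat
    have h' : ((rIdx d k : ℕ) : ℤ) ≤ ((k * a + (n - km) * (k - b) : ℕ) : ℤ) := by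
      exact_mod_cast this
    rw [Nat.cast_add, hcast] at h'
    push_cast at h' ⊢
    linarith
  have hXR : (k : ℤ) * a + ((n : ℤ) - km) * ((k : ℤ) - b)
      ≤ k * ((n : ℤ) - 1) + km * ((a : ℤ) + b + 1) - (km : ℤ) ^ 2 - b * n := by
    have hfac : k * ((n : ℤ) - 1) + km * ((a : ℤ) + b + 1) - (km : ℤ) ^ 2 - b * n
        - ((k : ℤ) * a + ((n : ℤ) - km) * ((k : ℤ) - b))
        = ((km : ℤ) - k) * ((a : ℤ) + 1 - km) := by ring
    have h1 : (0 : ℤ) ≤ ((km : ℤ) - k) * ((a : ℤ) + 1 - km) := by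
      apply mul_nonneg
      · have : (k : ℤ) ≤ km := by exact_mod_cast hkkm
        linarith
      · have : (km : ℤ) ≤ a := by exact_mod_cast hak
        linarith
    linarith
  refine ⟨le_trans hX hXR, ?_⟩
  intro heq
  -- equality forces both inequalities tight
  have heq1 : (rIdx d k : ℤ) = (k : ℤ) * a + ((n : ℤ) - km) * ((k : ℤ) - b) := le_antisymm hX (by linarith)
  have heq2 : ((km : ℤ) - k) * ((a : ℤ) + 1 - km) = 0 := by linarith
  have hkeq : k = km := by
    rcases mul_eq_zero.1 heq2 with h | h
    · have : (k : ℤ) = km := by linarith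
      exact_mod_cast this
    · exfalso
      have : (km : ℤ) ≤ a := by exact_mod_cast hak
      linarith
  -- nat equality
  have hnateq : rIdx d k = k * a + (n - km) * (k - b) := by
    have : ((rIdx d k : ℕ) : ℤ) = ((k * a + (n - km) * (k - b) : ℕ) : ℤ) := by
      rw [Nat.cast_add, hcast]
      push_cast
      linarith
    exact_mod_cast this
  have hS1eq : (∑ i ∈ A, d i) = k * a := by
    rw [hsplit, hS2] at hnateq
    have := hboundS1
    have := hboundS2
    omega
  have hS2eq : (∑ m : Fin n, (if d m < k then k - d m else 0)) = (n - km) * (k - b) := by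
    rw [hsplit, hS2] at hnateq
    omega
  refine ⟨hkeq, ?_⟩
  -- pointwise from S1
  have hS1pt : ∀ i ∈ A, d i = a := by
    have hsum : (∑ i ∈ A, d i) = ∑ _i ∈ A, a := by
      rw [hS1eq, Finset.sum_const, hcardA, smul_eq_mul]
    exact fun i hi => (Finset.sum_eq_sum_iff_of_le hS1le).1 hsum i hi
  -- pointwise from S2
  have hS2pt : ∀ m : Fin n, (if d m < k then k - d m else 0)
      = (if km ≤ (m : ℕ) then k - b else 0) := by
    have hsum : (∑ m : Fin n, (if d m < k then k - d m else 0))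
        = ∑ m : Fin n, (if km ≤ (m : ℕ) then k - b else 0) := by
      rw [hS2eq, hsumh]
    exact fun m => (Finset.sum_eq_sum_iff_of_le fun m _ => hgle m).1 hsum m (Finset.mem_univ m)
  intro i
  by_cases hi : (i : ℕ) < km
  · rw [if_pos hi]
    apply hS1pt
    rw [hA, Finset.mem_filter]
    exact ⟨Finset.mem_univ i, by omega⟩
  · rw [if_neg hi]
    have := hS2pt i
    rw [if_pos (by omega : km ≤ (i : ℕ))] at this
    have hbdi := hbd i
    split at this <;> omega
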